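/- Let L be a Tonelli Lagrangian on ℝⁿ with fundamental solution A_t and Mañé critical value c_H[0], and let u be a weak KAM solution of H(x,Du(x)) = c_H[0]. Then there exists a constant λ₀>0, depending only on L and the Lipschitz constant of u, such that for every t>0, every x∈ℝⁿ, every maximum point y_{t,x} of φ^x_t(y) = u(y) − A_t(x,y) − c_H[0]·t, and every minimum point z_{t,x} of ψ^x_t(y) = u(y) + A_t(y,x) + c_H[0]·t, one has |y_{t,x} − x| ≤ λ₀·t and |z_{t,x} − x| ≤ λ₀·t. -/

import Mathlib

open Set MeasureTheory Filter Topology RealInnerProductSpace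

noncomputable section

variable {E : Type*} [NormedAddCommGroup E] [InnerProductSpace ℝ E] [CompleteSpace E]

/-- A superlinear function `θ : ℝ → ℝ`. -/
def IsSuperlinear (θ : ℝ → ℝ) : Prop := ∀ M : ℝ, ∃ r₀ : ℝ, ∀ r : ℝ, r₀ ≤ r → M * r ≤ θ r

/-- Tonelli Lagrangian: C², uniformly convex in `v`, with superlinear growth and
uniform bounds on first and second derivatives. -/
def IsTonelli (L : E → E → ℝ) : Prop :=
  ContDiff ℝ 2 (Function.uncurry L) ∧
  (∃ ν : ℝ → ℝ, (∀ r, 0 < ν r) ∧ (∀ r s : ℝ, r ≤ s → ν s ≤ ν r) ∧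
    ∀ x v w : E, ν ‖v‖ * ‖w‖ ^ 2 ≤ iteratedFDeriv ℝ 2 (fun v' => L x v') v ![w, w]) ∧
  (∃ θ₁ θ₂ : ℝ → ℝ, IsSuperlinear θ₁ ∧ IsSuperlinear θ₂ ∧ (∀ r, 0 ≤ θ₁ r) ∧ (∀ r, 0 ≤ θ₂ r) ∧
    ∃ c₀ : ℝ, 0 < c₀ ∧ ∀ x v : E, θ₁ ‖v‖ - c₀ ≤ L x v ∧ L x v ≤ θ₂ ‖v‖) ∧
  (∃ K : ℝ → ℝ, (∀ r s : ℝ, r ≤ s → K r ≤ K s) ∧ (∀ r, 0 ≤ K r) ∧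
    ∀ x v : E, ‖fderiv ℝ (Function.uncurry L) (x, v)‖ ≤ K ‖v‖ ∧
      ‖iteratedFDeriv ℝ 2 (Function.uncurry L) (x, v)‖ ≤ K ‖v‖)

/-- Admissible curves from `x` to `y` in time `t`. -/
def Admissible (t : ℝ) (x y : E) (ξ : ℝ → E) : Prop :=
  ContDiffOn ℝ 1 ξ (Icc 0 t) ∧ ξ 0 = x ∧ ξ t = y

/-- The action of a curve on `[0,t]`. -/
def LagAction (L : E → E → ℝ) (t : ℝ) (ξ : ℝ → E) : ℝ :=
  ∫ s in (0:ℝ)..t, L (ξ s) (derivWithin ξ (Icc 0 t) s)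

/-- `A` is the fundamental solution associated with `L`: for each `t > 0` and endpoints, the
minimum of the action is attained and equals `A t x y`. -/
def IsFundSol (L : E → E → ℝ) (A : ℝ → E → E → ℝ) : Prop :=
  ∀ t : ℝ, 0 < t → ∀ x y : E,
    (∃ ξ, Admissible t x y ξ ∧ A t x y = LagAction L t ξ) ∧
    (∀ ξ, Admissible t x y ξ → A t x y ≤ LagAction L t ξ)

/-- A minimizer for `A_t(x,y)`. -/
def IsMinimizer (L : E → E → ℝ) (t : ℝ) (x y : E) (ξ : ℝ → E) : Prop :=
  Admissible t x y ξ ∧ ∀ η, Admissible t x y η → LagAction L t ξ ≤ LagAction L t η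

/-- The Mañé critical value `c_H[0] = -inf { A_t(x,x)/t : t > 0, x }`. -/
def ManeCrit (A : ℝ → E → E → ℝ) : ℝ :=
  - sInf {r : ℝ | ∃ t : ℝ, 0 < t ∧ ∃ x : E, r = A t x x / t}

/-- Weak KAM solution for the value `c` : `u = T⁻ₜ u + c t` for all `t > 0`. -/
def IsWeakKAM (A : ℝ → E → E → ℝ) (c : ℝ) (u : E → ℝ) : Prop :=
  Continuous u ∧ ∀ t : ℝ, 0 < t → ∀ x : E,
    u x = sInf {r : ℝ | ∃ y : E, r = u y + A t y x + c * t}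

/-- The (Dini) superdifferential of `u` at `x`. -/
def SuperDiff (u : E → ℝ) (x : E) : Set E :=
  {p | ∀ ε : ℝ, 0 < ε → ∃ δ : ℝ, 0 < δ ∧
    ∀ y : E, ‖y - x‖ < δ → u y - u x - ⟪p, y - x⟫ ≤ ε * ‖y - x‖}

/-- The singular set of `u`: points where `D⁺u` is not a singleton. -/
def Sing (u : E → ℝ) : Set E :=
  {x | ∃ p ∈ SuperDiff u x, ∃ q ∈ SuperDiff u x, p ≠ q}

/-- A curve `γ` is `(u, L, c)`-calibrated on `[a,b]`. -/
def CalibOn (L : E → E → ℝ) (c : ℝ) (u : E → ℝ) (γ : ℝ → E) (a b : ℝ) : Prop :=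
  ContDiffOn ℝ 1 γ (Icc a b) ∧
  u (γ b) - u (γ a) = (∫ s in a..b, L (γ s) (derivWithin γ (Icc a b) s)) + c * (b - a)

/-- The cut locus of `u` : points where no calibrated curve can be extended beyond. -/
def Cut (L : E → E → ℝ) (c : ℝ) (u : E → ℝ) : Set E :=
  {x | ∀ γ : ℝ → E, ∀ a b : ℝ, a ≤ b → CalibOn L c u γ a b → x ∈ γ '' Icc a b → x = γ b}

/-- The set of reachable (limiting) gradients of `u` at `x`. -/
def ReachGrad (u : E → ℝ) (x : E) : Set E :=
  {p | ∃ xs : ℕ → E, ∃ ps : ℕ → E, (∀ k, xs k ≠ x ∧ HasGradientAt u (ps k) (xs k)) ∧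
    Tendsto xs atTop (𝓝 x) ∧ Tendsto ps atTop (𝓝 p)}

/-- `H` is the Legendre-Fenchel transform of `L`. -/
def IsLegendre (L H : E → E → ℝ) : Prop :=
  ∀ x p : E, IsLUB {r : ℝ | ∃ v : E, r = ⟪p, v⟫ - L x v} (H x p)

/-- The cone `S_λ(x,t')`. -/
def Cone (x : E) (lam t' : ℝ) : Set (ℝ × E) :=
  {q | 0 < q.1 ∧ q.1 < t' ∧ ‖q.2 - x‖ < lam * q.1}

/-- A generalized characteristic for a mechanical Hamiltonian, i.e. a Lipschitz arc on
`[0,∞)` with `ẋ(s) ∈ A(x(s)) D⁺v(x(s))` for a.e. `s ≥ 0`. -/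
def MechArc (Amap : E → E →L[ℝ] E) (v : E → ℝ) (X : ℝ → E) : Prop :=
  (∃ K : NNReal, LipschitzOnWith K X (Ici 0)) ∧
  ∀ᵐ s : ℝ, 0 < s → ∃ p ∈ SuperDiff v (X s), HasDerivAt X (Amap (X s) p) s

/-- Euclidean space `ℝⁿ`. -/
abbrev Eu (n : ℕ) := EuclideanSpace ℝ (Fin n)

/-- A backward calibrated curve on `(-∞,0]` ending at `x`. -/
def BackwardCalib (L : E → E → ℝ) (c : ℝ) (u : E → ℝ) (x : E) (γ : ℝ → E) : Prop :=
  γ 0 = x ∧ ContDiffOn ℝ 1 γ (Iic 0) ∧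
  ∀ a b : ℝ, a ≤ b → b ≤ 0 →
    u (γ b) - u (γ a) = (∫ s in a..b, L (γ s) (derivWithin γ (Iic 0) s)) + c * (b - a)


end

/-!
Superlinearity of `L` gives `A t x y ≥ M ‖y - x‖ - C t` for every slope `M`, and straight segments
give `A t x y ≤ θ₂(‖y - x‖ / t) t`. Testing the weak KAM identity on a unit-speed segment shows that
`u` is Lipschitz with constant `Lip = θ₂ 1 + |c|`. Comparing a maximum point `y` of
`u - A t x · - c t` with `x` itself then gives
`(Lip + 1) ‖y - x‖ - C t ≤ A t x y ≤ u y - u x + A t x x ≤ Lip ‖y - x‖ + θ₂ 0 t`,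
so the slope `Lip + 1` beats the Lipschitz constant and `‖y - x‖ ≤ (C + θ₂ 0) t`.
-/

theorem IsSuperlinear.exists_affine_le {θ : ℝ → ℝ} (hθ : IsSuperlinear θ) (hθ0 : ∀ r, 0 ≤ θ r)
    {M : ℝ} (hM : 0 ≤ M) : ∃ C, ∀ r, M * r - C ≤ θ r := by
  obtain ⟨r₀, hr₀⟩ := hθ M
  refine ⟨M * max r₀ 0, fun r => ?_⟩
  have hC : 0 ≤ M * max r₀ 0 := mul_nonneg hM (le_max_right _ _)
  rcases le_or_gt r₀ r with h | h
  · linarith [hr₀ r h]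
  · have : M * r ≤ M * max r₀ 0 := mul_le_mul_of_nonneg_left (h.le.trans (le_max_left _ _)) hM
    linarith [hθ0 r]

section Tonelli

variable {E : Type*} [NormedAddCommGroup E] [InnerProductSpace ℝ E] {L : E → E → ℝ}

theorem IsTonelli.exists_affine_le (hL : IsTonelli L) {M : ℝ} (hM : 0 ≤ M) :
    ∃ C, ∀ x v, M * ‖v‖ - C ≤ L x v := by
  obtain ⟨-, -, ⟨θ₁, _θ₂, hθ₁, -, hθ₁0, -, c₀, -, hbound⟩, -⟩ := hL
  obtain ⟨C, hC⟩ := hθ₁.exists_affine_le hθ₁0 hM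
  exact ⟨C + c₀, fun x v => by linarith [hC ‖v‖, (hbound x v).1]⟩

theorem IsTonelli.exists_le_comp_norm (hL : IsTonelli L) :
    ∃ θ : ℝ → ℝ, (∀ r, 0 ≤ θ r) ∧ ∀ x v, L x v ≤ θ ‖v‖ := by
  obtain ⟨-, -, ⟨_θ₁, θ₂, -, -, -, hθ₂0, _c₀, -, hbound⟩, -⟩ := hL
  exact ⟨θ₂, hθ₂0, fun x v => (hbound x v).2⟩

end Tonelli

section Action

variable {E : Type*} [NormedAddCommGroup E] [InnerProductSpace ℝ E] {L : E → E → ℝ}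
  {A : ℝ → E → E → ℝ} {t : ℝ} {x y : E}

theorem Admissible.integral_derivWithin [CompleteSpace E] {ξ : ℝ → E} (ht : 0 < t)
    (hξ : Admissible t x y ξ) : ∫ s in (0 : ℝ)..t, derivWithin ξ (Icc 0 t) s = y - x := by
  rw [← hξ.2.1, ← hξ.2.2]
  refine intervalIntegral.integral_eq_sub_of_hasDerivAt_of_le ht.le hξ.1.continuousOn
    (fun s hs => ?_) ?_
  · have hnhds : Icc (0 : ℝ) t ∈ 𝓝 s := Icc_mem_nhds hs.1 hs.2
    rw [derivWithin_of_mem_nhds hnhds]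
    exact ((hξ.1.differentiableOn one_ne_zero s (Ioo_subset_Icc_self hs)).differentiableAt
      hnhds).hasDerivAt
  · refine ContinuousOn.intervalIntegrable ?_
    rw [uIcc_of_le ht.le]
    exact hξ.1.continuousOn_derivWithin (uniqueDiffOn_Icc ht) le_rfl

theorem Admissible.affine_le_lagAction [CompleteSpace E] (hLc : Continuous (Function.uncurry L))
    {M C : ℝ} (hM : 0 ≤ M) (hLM : ∀ x v, M * ‖v‖ - C ≤ L x v) {ξ : ℝ → E} (ht : 0 < t)
    (hξ : Admissible t x y ξ) : M * ‖y - x‖ - C * t ≤ LagAction L t ξ := by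
  set D := derivWithin ξ (Icc 0 t)
  have hD : ContinuousOn D (uIcc 0 t) := by
    rw [uIcc_of_le ht.le]
    exact hξ.1.continuousOn_derivWithin (uniqueDiffOn_Icc ht) le_rfl
  have hξc : ContinuousOn ξ (uIcc 0 t) := by
    rw [uIcc_of_le ht.le]
    exact hξ.1.continuousOn
  have hLint : IntervalIntegrable (fun s => L (ξ s) (D s)) volume 0 t :=
    (hLc.comp_continuousOn (hξc.prodMk hD)).intervalIntegrable
  rw [sub_le_iff_le_add]
  calc M * ‖y - x‖ = M * ‖∫ s in (0 : ℝ)..t, D s‖ := by rw [hξ.integral_derivWithin ht]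
    _ ≤ M * ∫ s in (0 : ℝ)..t, ‖D s‖ := by
      gcongr
      exact intervalIntegral.norm_integral_le_integral_norm ht.le
    _ = ∫ s in (0 : ℝ)..t, M * ‖D s‖ := (intervalIntegral.integral_const_mul _ _).symm
    _ ≤ ∫ s in (0 : ℝ)..t, (L (ξ s) (D s) + C) :=
      intervalIntegral.integral_mono_on ht.le (continuousOn_const.mul hD.norm).intervalIntegrable
        (hLint.add intervalIntegrable_const) fun s _ => by linarith [hLM (ξ s) (D s)]
    _ = LagAction L t ξ + C * t := by
      rw [intervalIntegral.integral_add hLint intervalIntegrable_const,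
        intervalIntegral.integral_const, LagAction, smul_eq_mul, sub_zero, mul_comm]

theorem IsFundSol.affine_le [CompleteSpace E] (hA : IsFundSol L A)
    (hLc : Continuous (Function.uncurry L)) {M C : ℝ} (hM : 0 ≤ M)
    (hLM : ∀ x v, M * ‖v‖ - C ≤ L x v) (ht : 0 < t) (x y : E) :
    M * ‖y - x‖ - C * t ≤ A t x y := by
  obtain ⟨ξ, hξ, hAξ⟩ := (hA t ht x y).1
  exact hAξ ▸ hξ.affine_le_lagAction hLc hM hLM ht

theorem IsFundSol.le_mul_comp_norm_div (hA : IsFundSol L A)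
    (hLc : Continuous (Function.uncurry L)) {θ : ℝ → ℝ} (hLθ : ∀ x v, L x v ≤ θ ‖v‖)
    (ht : 0 < t) (x y : E) : A t x y ≤ θ (‖y - x‖ / t) * t := by
  set w := t⁻¹ • (y - x)
  set ξ : ℝ → E := fun s => x + s • w
  have hξ' : ∀ s, HasDerivAt ξ w s := fun s =>
    (((hasDerivAt_id s).smul_const w).const_add x).congr_deriv (one_smul ℝ w)
  have hξ : Admissible t x y ξ := by
    refine ⟨(contDiff_const.add (contDiff_id.smul contDiff_const)).contDiffOn, by simp [ξ], ?_⟩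
    simp [ξ, w, smul_smul, mul_inv_cancel₀ ht.ne']
  have hw : ‖w‖ = ‖y - x‖ / t := by
    rw [norm_smul, norm_inv, Real.norm_of_nonneg ht.le, inv_mul_eq_div]
  calc A t x y ≤ LagAction L t ξ := (hA t ht x y).2 ξ hξ
    _ = ∫ s in (0 : ℝ)..t, L (ξ s) w := by
      refine intervalIntegral.integral_congr fun s hs => ?_
      rw [uIcc_of_le ht.le] at hs
      simp only [(hξ' s).hasDerivWithinAt.derivWithin (uniqueDiffOn_Icc ht s hs)]
    _ ≤ ∫ _ in (0 : ℝ)..t, θ ‖w‖ :=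
      intervalIntegral.integral_mono_on ht.le
        ((hLc.comp (by fun_prop : Continuous fun s => (ξ s, w))).intervalIntegrable 0 t)
        intervalIntegrable_const fun s _ => hLθ (ξ s) w
    _ = θ (‖y - x‖ / t) * t := by
      rw [intervalIntegral.integral_const, smul_eq_mul, sub_zero, hw, mul_comm]

end Action

section WeakKAM

variable {E : Type*} [NormedAddCommGroup E] {A : ℝ → E → E → ℝ} {c : ℝ} {u : E → ℝ} {t : ℝ}

theorem IsWeakKAM.le_of_bddBelow (hu : IsWeakKAM A c u) (ht : 0 < t) {x : E}
    (hbdd : BddBelow {r | ∃ y, r = u y + A t y x + c * t}) (y : E) :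
    u x ≤ u y + A t y x + c * t := by
  rw [hu.2 t ht x]
  exact csInf_le hbdd ⟨y, rfl⟩

theorem IsWeakKAM.eq_zero_of_not_bddBelow (hu : IsWeakKAM A c u) (ht : 0 < t) {x : E}
    (hbdd : ¬BddBelow {r | ∃ y, r = u y + A t y x + c * t}) : u x = 0 := by
  rw [hu.2 t ht x, Real.sInf_of_not_bddBelow hbdd]

theorem le_add_mul_norm_of_forall_le {K : ℝ}
    (hA : ∀ x y : E, x ≠ y → A ‖x - y‖ y x ≤ K * ‖x - y‖) {x : E}
    (hx : ∀ y t, 0 < t → u x ≤ u y + A t y x + c * t) (y : E) :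
    u x ≤ u y + (K + |c|) * ‖x - y‖ := by
  rcases eq_or_ne x y with rfl | hxy
  · simp
  have hpos : 0 < ‖x - y‖ := norm_sub_pos_iff.2 hxy
  have hc : c * ‖x - y‖ ≤ |c| * ‖x - y‖ := by gcongr; exact le_abs_self c
  linarith [hx y _ hpos, hA x y hxy]

theorem bddBelow_of_le_add_mul_norm {M C : ℝ} (hM : 0 ≤ M)
    (hA : ∀ x y : E, M * ‖y - x‖ - C * t ≤ A t x y) {x₀ : E}
    (hx₀ : ∀ y, u x₀ ≤ u y + M * ‖x₀ - y‖) (x : E) :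
    BddBelow {r | ∃ y, r = u y + A t y x + c * t} := by
  refine ⟨u x₀ - M * ‖x₀ - x‖ - C * t + c * t, ?_⟩
  rintro _ ⟨y, rfl⟩
  have htri : M * ‖x₀ - y‖ ≤ M * ‖x₀ - x‖ + M * ‖x - y‖ := by
    rw [← mul_add]; gcongr; exact norm_sub_le_norm_sub_add_norm_sub x₀ x y
  linarith [hA y x, hx₀ y]

theorem IsWeakKAM.le_add_mul_norm (hu : IsWeakKAM A c u) {K C : ℝ} (hK : 0 ≤ K)
    (hAle : ∀ x y : E, x ≠ y → A ‖x - y‖ y x ≤ K * ‖x - y‖)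
    (hAge : ∀ t, 0 < t → ∀ x y : E, (K + |c|) * ‖y - x‖ - C * t ≤ A t x y) (x y : E) :
    u x ≤ u y + (K + |c|) * ‖x - y‖ := by
  have hLip : 0 ≤ K + |c| := add_nonneg hK (abs_nonneg c)
  have hdom : ∀ x₀ : E, (∀ t, 0 < t → BddBelow {r | ∃ y, r = u y + A t y x₀ + c * t}) →
      ∀ y, u x₀ ≤ u y + (K + |c|) * ‖x₀ - y‖ := fun x₀ hbdd =>
    le_add_mul_norm_of_forall_le hAle fun y t ht => hu.le_of_bddBelow ht (hbdd t ht) y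
  -- If every Lax–Oleinik set were unbounded below, the junk value `sInf = 0` would force `u = 0`.
  obtain ⟨x₀, hx₀⟩ : ∃ x₀ : E, ∀ y, u x₀ ≤ u y + (K + |c|) * ‖x₀ - y‖ := by
    by_cases h : ∃ x₀ : E, ∀ t, 0 < t → BddBelow {r | ∃ y, r = u y + A t y x₀ + c * t}
    · obtain ⟨x₀, hx₀⟩ := h
      exact ⟨x₀, hdom x₀ hx₀⟩
    · push Not at h
      have hu0 : ∀ x, u x = 0 := fun x =>
        let ⟨_, ht, hbdd⟩ := h x
        hu.eq_zero_of_not_bddBelow ht hbdd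
      exact ⟨0, fun y => by simp only [hu0, zero_add]; positivity⟩
  exact hdom x (fun t ht => bddBelow_of_le_add_mul_norm hLip (hAge t ht) hx₀ x) y

end WeakKAM

section Displacement

variable {E : Type*} [NormedAddCommGroup E] {A : ℝ → E → E → ℝ} {c : ℝ} {u : E → ℝ}
  {t M C D : ℝ} {x : E}

theorem norm_sub_le_of_forall_le_sub_fundSol (hu : ∀ x y, u x ≤ u y + M * ‖x - y‖)
    (hAge : ∀ y, (M + 1) * ‖y - x‖ - C * t ≤ A t x y) (hAle : A t x x ≤ D * t) {ystar : E}
    (hmax : ∀ y, u y - A t x y - c * t ≤ u ystar - A t x ystar - c * t) :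
    ‖ystar - x‖ ≤ (C + D) * t := by
  linarith [hmax x, hAge ystar, hu ystar x]

theorem norm_sub_le_of_forall_add_fundSol_le (hu : ∀ x y, u x ≤ u y + M * ‖x - y‖)
    (hAge : ∀ z, (M + 1) * ‖x - z‖ - C * t ≤ A t z x) (hAle : A t x x ≤ D * t) {zstar : E}
    (hmin : ∀ y, u zstar + A t zstar x + c * t ≤ u y + A t y x + c * t) :
    ‖zstar - x‖ ≤ (C + D) * t := by
  rw [norm_sub_rev]
  linarith [hmin x, hAge zstar, hu x zstar]

end Displacement

theorem statement7 {n : ℕ} (L : Eu n → Eu n → ℝ) (A : ℝ → Eu n → Eu n → ℝ)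
    (hL : IsTonelli L) (hA : IsFundSol L A)
    (u : Eu n → ℝ) (hu : IsWeakKAM A (ManeCrit A) u) :
    ∃ lam₀ : ℝ, 0 < lam₀ ∧ ∀ t : ℝ, 0 < t → ∀ x : Eu n,
      (∀ ystar : Eu n,
        (∀ y : Eu n, u y - A t x y - ManeCrit A * t ≤ u ystar - A t x ystar - ManeCrit A * t) →
        ‖ystar - x‖ ≤ lam₀ * t) ∧
      (∀ zstar : Eu n,
        (∀ y : Eu n, u zstar + A t zstar x + ManeCrit A * t ≤ u y + A t y x + ManeCrit A * t) →
        ‖zstar - x‖ ≤ lam₀ * t) := by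
  have hLc : Continuous (Function.uncurry L) := hL.1.continuous
  obtain ⟨θ, hθ0, hLθ⟩ := hL.exists_le_comp_norm
  have hAle (t : ℝ) (ht : 0 < t) (x y : Eu n) : A t x y ≤ θ (‖y - x‖ / t) * t :=
    hA.le_mul_comp_norm_div hLc hLθ ht x y
  have hAge {M : ℝ} (hM : 0 ≤ M) : ∃ C, ∀ t, 0 < t → ∀ x y : Eu n,
      M * ‖y - x‖ - C * t ≤ A t x y :=
    (hL.exists_affine_le hM).imp fun _ hC _ ht => hA.affine_le hLc hM hC ht
  set Lip := θ 1 + |ManeCrit A|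
  have hLip : 0 ≤ Lip := add_nonneg (hθ0 1) (abs_nonneg _)
  obtain ⟨C₁, hC₁⟩ := hAge hLip
  obtain ⟨C, hC⟩ := hAge (by positivity : 0 ≤ Lip + 1)
  have hLipschitz := hu.le_add_mul_norm (hθ0 1) (fun x y hxy => by
    simpa [div_self (norm_sub_pos_iff.2 hxy).ne'] using hAle _ (norm_sub_pos_iff.2 hxy) y x) hC₁
  have hdiag (t : ℝ) (ht : 0 < t) (x : Eu n) : A t x x ≤ θ 0 * t := by simpa using hAle t ht x x
  refine ⟨max (C + θ 0) 1, by positivity, fun t ht x => ⟨fun ystar hmax => ?_, fun zstar hmin => ?_⟩⟩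
  · exact (norm_sub_le_of_forall_le_sub_fundSol hLipschitz (hC t ht x) (hdiag t ht x) hmax).trans
      (by gcongr; exact le_max_left _ _)
  · exact (norm_sub_le_of_forall_add_fundSol_le hLipschitz (fun z => hC t ht z x) (hdiag t ht x)
      hmin).trans (by gcongr; exact le_max_left _ _)
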